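/- arXiv:2601.22496 — 3 statements merged into one kernel-verified Lean document; each statement's English description precedes it below -/
import Mathlib

section
/- Conditional KL Risk Decomposition: for every policy π and every φ with Z = φ(S,G), the conditional KL risk decomposes exactly as R(π;φ) = M(π;φ) + I(A;G|S,Z), where M(π;φ) is the modeling error and I(A;G|S,Z) is the representation error. -/
open scoped Classical
open Finset

/-- Joint probability `P(f = x)` of a discrete random variable `f` on the sample space
`𝒮 × 𝒢 × 𝒜` equipped with the pmf `p`. -/
noncomputable def Pr {𝒮 𝒢 𝒜 : Type*} [Fintype 𝒮] [Fintype 𝒢] [Fintype 𝒜] {X : Type*}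
    (p : 𝒮 × 𝒢 × 𝒜 → ℝ) (f : 𝒮 × 𝒢 × 𝒜 → X) (x : X) : ℝ :=
  ∑ ω : 𝒮 × 𝒢 × 𝒜, if f ω = x then p ω else 0

/-- Conditional mutual information `I(X;Y|W)` of discrete random variables that are
deterministic functions of a sample drawn from the pmf `p` on `𝒮 × 𝒢 × 𝒜`. -/
noncomputable def CMI {𝒮 𝒢 𝒜 : Type*} [Fintype 𝒮] [Fintype 𝒢] [Fintype 𝒜]
    {X Y W : Type*} [Fintype X] [Fintype Y] [Fintype W]
    (p : 𝒮 × 𝒢 × 𝒜 → ℝ) (fX : 𝒮 × 𝒢 × 𝒜 → X) (fY : 𝒮 × 𝒢 × 𝒜 → Y)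
    (fW : 𝒮 × 𝒢 × 𝒜 → W) : ℝ :=
  ∑ x : X, ∑ y : Y, ∑ w : W,
    if 0 < Pr p (fun ω => (fX ω, fY ω, fW ω)) (x, y, w) then
      Pr p (fun ω => (fX ω, fY ω, fW ω)) (x, y, w) *
        Real.log ((Pr p (fun ω => (fX ω, fY ω, fW ω)) (x, y, w) * Pr p fW w) /
          (Pr p (fun ω => (fX ω, fW ω)) (x, w) * Pr p (fun ω => (fY ω, fW ω)) (y, w)))
    else 0

/-- Marginal `p(s,g) := ∑ₐ p(s,g,a)`. -/
noncomputable def pSG {𝒮 𝒢 𝒜 : Type*} [Fintype 𝒜] (p : 𝒮 × 𝒢 × 𝒜 → ℝ) (s : 𝒮) (g : 𝒢) : ℝ :=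
  ∑ a : 𝒜, p (s, g, a)

/-- Conditional `p(a|s,g) := p(s,g,a) / p(s,g)`. -/
noncomputable def pA {𝒮 𝒢 𝒜 : Type*} [Fintype 𝒜] (p : 𝒮 × 𝒢 × 𝒜 → ℝ) (s : 𝒮) (g : 𝒢)
    (a : 𝒜) : ℝ :=
  p (s, g, a) / pSG p s g

/-- Marginal `P(S = s, φ(S,G) = z) = ∑_{g' : φ(s,g')=z} p(s,g')`. -/
noncomputable def pSZ {𝒮 𝒢 𝒜 𝒵 : Type*} [Fintype 𝒢] [Fintype 𝒜] (p : 𝒮 × 𝒢 × 𝒜 → ℝ)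
    (φ : 𝒮 × 𝒢 → 𝒵) (s : 𝒮) (z : 𝒵) : ℝ :=
  ∑ g' : 𝒢, if φ (s, g') = z then pSG p s g' else 0

/-- Induced representation-conditioned distribution
`p(a|s,z) := (∑_{g' : φ(s,g')=z} p(s,g',a)) / (∑_{g' : φ(s,g')=z} p(s,g'))`. -/
noncomputable def pAZ {𝒮 𝒢 𝒜 𝒵 : Type*} [Fintype 𝒢] [Fintype 𝒜] (p : 𝒮 × 𝒢 × 𝒜 → ℝ)
    (φ : 𝒮 × 𝒢 → 𝒵) (s : 𝒮) (z : 𝒵) (a : 𝒜) : ℝ :=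
  (∑ g' : 𝒢, if φ (s, g') = z then p (s, g', a) else 0) /
    (∑ g' : 𝒢, if φ (s, g') = z then pSG p s g' else 0)

/-- The conditional KL risk `R(π;φ)`. -/
noncomputable def KLRisk {𝒮 𝒢 𝒜 𝒵 : Type*} [Fintype 𝒮] [Fintype 𝒢] [Fintype 𝒜]
    (p : 𝒮 × 𝒢 × 𝒜 → ℝ) (φ : 𝒮 × 𝒢 → 𝒵) (π : 𝒮 → 𝒵 → 𝒜 → ℝ) : ℝ :=
  ∑ s : 𝒮, ∑ g : 𝒢,
    if 0 < pSG p s g then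
      pSG p s g * ∑ a : 𝒜,
        (if 0 < pA p s g a then pA p s g a * Real.log (pA p s g a / π s (φ (s, g)) a) else 0)
    else 0

/-- The modeling error `M(π;φ)`. -/
noncomputable def ModelErr {𝒮 𝒢 𝒜 𝒵 : Type*} [Fintype 𝒮] [Fintype 𝒢] [Fintype 𝒜] [Fintype 𝒵]
    (p : 𝒮 × 𝒢 × 𝒜 → ℝ) (φ : 𝒮 × 𝒢 → 𝒵) (π : 𝒮 → 𝒵 → 𝒜 → ℝ) : ℝ :=
  ∑ s : 𝒮, ∑ z : 𝒵,
    if 0 < pSZ p φ s z then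
      pSZ p φ s z * ∑ a : 𝒜,
        (if 0 < pAZ p φ s z a then pAZ p φ s z a * Real.log (pAZ p φ s z a / π s z a) else 0)
    else 0

/-! With `z = φ(s,g)`, each of the three quantities is a sum over the support of `p` of
`p(s,g,a)` times a logarithm: `log (p(a|s,g) / π(a|s,z))` for the risk,
`log (p(a|s,z) / π(a|s,z))` for the modeling error and `log (p(a|s,g) / p(a|s,z))` for the
conditional mutual information. For the latter two this is a regrouping of the sum over `z` along
the fibres of `φ(s, ·)`; the decomposition is then `log (x/z) = log (y/z) + log (x/y)` term by
term. -/

open Real (log log_mul)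

lemma ite_pos_mul_of_nonneg {x : ℝ} (hx : 0 ≤ x) (y : ℝ) :
    (if 0 < x then x * y else 0) = x * y := by
  rcases hx.eq_or_lt with rfl | hx <;> simp [*]

lemma sum_mul_div_sum_cancel {ι : Type*} [Fintype ι] {q : ι → ℝ} (hq : ∀ i, 0 ≤ q i) (i : ι) :
    (∑ j, q j) * (q i / ∑ j, q j) = q i :=
  mul_div_cancel_of_imp' fun h =>
    le_antisymm (h ▸ single_le_sum (fun j _ => hq j) (mem_univ i)) (hq i)

lemma sum_sum_ite_apply_eq {ι κ : Type*} [Fintype ι] [Fintype κ] (φ : ι → κ) (F : ι → κ → ℝ) :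
    ∑ z, ∑ i, (if φ i = z then F i z else 0) = ∑ i, F i (φ i) := by
  rw [sum_comm]
  exact sum_congr rfl fun i _ => Fintype.sum_ite_eq (φ i) (F i)

lemma log_div_eq_log_div_add_log_div {x y z : ℝ} (hx : x ≠ 0) (hy : y ≠ 0) (hz : z ≠ 0) :
    log (x / z) = log (y / z) + log (x / y) := by
  rw [← log_mul (div_ne_zero hy hz) (div_ne_zero hx hy)]
  congr 1
  field_simp

section

variable {𝒮 𝒢 𝒜 𝒵 : Type*} {p : 𝒮 × 𝒢 × 𝒜 → ℝ}

lemma Pr_nonneg [Fintype 𝒮] [Fintype 𝒢] [Fintype 𝒜] {X : Type*} (hp0 : ∀ ω, 0 ≤ p ω)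
    (f : 𝒮 × 𝒢 × 𝒜 → X) (x : X) : 0 ≤ Pr p f x :=
  sum_nonneg fun ω _ => by split_ifs <;> simp [hp0 ω]

section Conditional

variable [Fintype 𝒜]

lemma pSG_nonneg (hp0 : ∀ ω, 0 ≤ p ω) (s : 𝒮) (g : 𝒢) : 0 ≤ pSG p s g :=
  sum_nonneg fun _ _ => hp0 _

lemma le_pSG (hp0 : ∀ ω, 0 ≤ p ω) (s : 𝒮) (g : 𝒢) (a : 𝒜) : p (s, g, a) ≤ pSG p s g :=
  single_le_sum (fun a _ => hp0 (s, g, a)) (mem_univ a)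

lemma pA_nonneg (hp0 : ∀ ω, 0 ≤ p ω) (s : 𝒮) (g : 𝒢) (a : 𝒜) : 0 ≤ pA p s g a :=
  div_nonneg (hp0 _) (pSG_nonneg hp0 s g)

lemma pA_pos (hp0 : ∀ ω, 0 ≤ p ω) {s : 𝒮} {g : 𝒢} {a : 𝒜} (h : 0 < p (s, g, a)) :
    0 < pA p s g a :=
  div_pos h (h.trans_le (le_pSG hp0 s g a))

lemma pSG_mul_pA (hp0 : ∀ ω, 0 ≤ p ω) (s : 𝒮) (g : 𝒢) (a : 𝒜) :
    pSG p s g * pA p s g a = p (s, g, a) :=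
  sum_mul_div_sum_cancel (fun a => hp0 (s, g, a)) a

end Conditional

section Representation

variable [Fintype 𝒢] (φ : 𝒮 × 𝒢 → 𝒵)

/-- `P(S = s, Z = z, A = a)`, the numerator of `pAZ`. -/
noncomputable def pSZA (p : 𝒮 × 𝒢 × 𝒜 → ℝ) (s : 𝒮) (z : 𝒵) (a : 𝒜) : ℝ :=
  ∑ g : 𝒢, if φ (s, g) = z then p (s, g, a) else 0

lemma pSZA_nonneg (hp0 : ∀ ω, 0 ≤ p ω) (s : 𝒮) (z : 𝒵) (a : 𝒜) : 0 ≤ pSZA φ p s z a :=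
  sum_nonneg fun g _ => by split_ifs <;> simp [hp0]

lemma le_pSZA (hp0 : ∀ ω, 0 ≤ p ω) (s : 𝒮) (g : 𝒢) (a : 𝒜) :
    p (s, g, a) ≤ pSZA φ p s (φ (s, g)) a :=
  calc p (s, g, a) = if φ (s, g) = φ (s, g) then p (s, g, a) else 0 := (if_pos rfl).symm
    _ ≤ pSZA φ p s (φ (s, g)) a :=
      single_le_sum (f := fun g' => if φ (s, g') = φ (s, g) then p (s, g', a) else 0)
        (fun g' _ => by split_ifs <;> simp [hp0]) (mem_univ g)

variable [Fintype 𝒜]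

lemma pSZ_eq_sum_pSZA (s : 𝒮) (z : 𝒵) : pSZ p φ s z = ∑ a, pSZA φ p s z a := by
  unfold pSZ pSZA
  rw [sum_comm]
  refine sum_congr rfl fun g _ => ?_
  split_ifs <;> simp [pSG]

lemma pSZ_nonneg (hp0 : ∀ ω, 0 ≤ p ω) (s : 𝒮) (z : 𝒵) : 0 ≤ pSZ p φ s z := by
  rw [pSZ_eq_sum_pSZA]
  exact sum_nonneg fun a _ => pSZA_nonneg φ hp0 s z a

lemma pSZA_le_pSZ (hp0 : ∀ ω, 0 ≤ p ω) (s : 𝒮) (z : 𝒵) (a : 𝒜) :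
    pSZA φ p s z a ≤ pSZ p φ s z := by
  rw [pSZ_eq_sum_pSZA]
  exact single_le_sum (fun a _ => pSZA_nonneg φ hp0 s z a) (mem_univ a)

lemma pAZ_eq_div (s : 𝒮) (z : 𝒵) (a : 𝒜) : pAZ p φ s z a = pSZA φ p s z a / pSZ p φ s z :=
  rfl

lemma pAZ_nonneg (hp0 : ∀ ω, 0 ≤ p ω) (s : 𝒮) (z : 𝒵) (a : 𝒜) : 0 ≤ pAZ p φ s z a :=
  div_nonneg (pSZA_nonneg φ hp0 s z a) (pSZ_nonneg φ hp0 s z)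

lemma pAZ_pos (hp0 : ∀ ω, 0 ≤ p ω) {s : 𝒮} {g : 𝒢} {a : 𝒜} (h : 0 < p (s, g, a)) :
    0 < pAZ p φ s (φ (s, g)) a := by
  have hSZA := h.trans_le (le_pSZA φ hp0 s g a)
  exact div_pos hSZA (hSZA.trans_le (pSZA_le_pSZ φ hp0 _ _ a))

lemma pSZ_mul_pAZ (hp0 : ∀ ω, 0 ≤ p ω) (s : 𝒮) (z : 𝒵) (a : 𝒜) :
    pSZ p φ s z * pAZ p φ s z a = pSZA φ p s z a := by
  rw [pAZ_eq_div, pSZ_eq_sum_pSZA]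
  exact sum_mul_div_sum_cancel (pSZA_nonneg φ hp0 s z) a

end Representation

section Decomposition

variable [Fintype 𝒮] [Fintype 𝒢] [Fintype 𝒜] (φ : 𝒮 × 𝒢 → 𝒵) (π : 𝒮 → 𝒵 → 𝒜 → ℝ)

lemma klRisk_eq_sum (hp0 : ∀ ω, 0 ≤ p ω) :
    KLRisk p φ π = ∑ s, ∑ g, ∑ a, p (s, g, a) * log (pA p s g a / π s (φ (s, g)) a) := by
  refine sum_congr rfl fun s _ => sum_congr rfl fun g _ => ?_
  rw [ite_pos_mul_of_nonneg (pSG_nonneg hp0 s g), mul_sum]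
  refine sum_congr rfl fun a _ => ?_
  rw [ite_pos_mul_of_nonneg (pA_nonneg hp0 s g a), ← mul_assoc, pSG_mul_pA hp0]

lemma modelErr_eq_sum [Fintype 𝒵] (hp0 : ∀ ω, 0 ≤ p ω) :
    ModelErr p φ π =
      ∑ s, ∑ g, ∑ a, p (s, g, a) * log (pAZ p φ s (φ (s, g)) a / π s (φ (s, g)) a) := by
  refine sum_congr rfl fun s _ => ?_
  calc _ = ∑ z, ∑ a, pSZA φ p s z a * log (pAZ p φ s z a / π s z a) := by
        refine sum_congr rfl fun z _ => ?_
        rw [ite_pos_mul_of_nonneg (pSZ_nonneg φ hp0 s z), mul_sum]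
        refine sum_congr rfl fun a _ => ?_
        rw [ite_pos_mul_of_nonneg (pAZ_nonneg φ hp0 s z a), ← mul_assoc, pSZ_mul_pAZ φ hp0]
    _ = ∑ z, ∑ g, if φ (s, g) = z then
          ∑ a, p (s, g, a) * log (pAZ p φ s z a / π s z a) else 0 := by
        refine sum_congr rfl fun z _ => ?_
        simp only [pSZA, sum_mul, ite_mul, zero_mul]
        rw [sum_comm]
        exact sum_congr rfl fun g _ => by rw [sum_ite_irrel, sum_const_zero]
    _ = _ := sum_sum_ite_apply_eq (fun g => φ (s, g)) _

lemma Pr_SZ (w : 𝒮 × 𝒵) : Pr p (fun ω => (ω.1, φ (ω.1, ω.2.1))) w = pSZ p φ w.1 w.2 := by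
  simp only [Pr, pSZ, pSG, Fintype.sum_prod_type, Prod.ext_iff, ite_and, sum_ite_irrel,
    sum_const_zero, sum_ite_eq', mem_univ, if_true]
  refine sum_congr rfl fun g _ => ?_
  split_ifs <;> simp

lemma Pr_ASZ (a : 𝒜) (w : 𝒮 × 𝒵) :
    Pr p (fun ω => (ω.2.2, (ω.1, φ (ω.1, ω.2.1)))) (a, w) = pSZA φ p w.1 w.2 a := by
  simp [Pr, pSZA, Fintype.sum_prod_type, Prod.ext_iff, ite_and]

lemma Pr_GSZ (g : 𝒢) (w : 𝒮 × 𝒵) :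
    Pr p (fun ω => (ω.2.1, (ω.1, φ (ω.1, ω.2.1)))) (g, w) =
      if φ (w.1, g) = w.2 then pSG p w.1 g else 0 := by
  simp only [Pr, pSG, Fintype.sum_prod_type, Prod.ext_iff, ite_and, sum_ite_irrel,
    sum_const_zero, sum_ite_eq', mem_univ, if_true]
  split_ifs <;> simp

lemma Pr_AGSZ (a : 𝒜) (g : 𝒢) (w : 𝒮 × 𝒵) :
    Pr p (fun ω => (ω.2.2, ω.2.1, (ω.1, φ (ω.1, ω.2.1)))) (a, g, w) =
      if φ (w.1, g) = w.2 then p (w.1, g, a) else 0 := by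
  simp [Pr, Fintype.sum_prod_type, Prod.ext_iff, ite_and]

lemma cmi_eq_sum [Fintype 𝒵] (hp0 : ∀ ω, 0 ≤ p ω) :
    CMI p (fun ω => ω.2.2) (fun ω => ω.2.1) (fun ω => (ω.1, φ (ω.1, ω.2.1))) =
      ∑ s, ∑ g, ∑ a, p (s, g, a) * log (pA p s g a / pAZ p φ s (φ (s, g)) a) := by
  calc _ = ∑ a, ∑ g, ∑ s, ∑ z,
        if φ (s, g) = z then p (s, g, a) * log (pA p s g a / pAZ p φ s z a) else 0 := by
        refine sum_congr rfl fun a _ => sum_congr rfl fun g _ => ?_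
        rw [Fintype.sum_prod_type]
        refine sum_congr rfl fun s _ => sum_congr rfl fun z _ => ?_
        rw [ite_pos_mul_of_nonneg (Pr_nonneg hp0 _ _)]
        simp only [Pr_AGSZ, Pr_SZ, Pr_ASZ, Pr_GSZ]
        split_ifs
        · rw [pA, pAZ_eq_div, div_div_div_eq, mul_comm (pSG p s g)]
        · simp
    _ = ∑ a, ∑ g, ∑ s, p (s, g, a) * log (pA p s g a / pAZ p φ s (φ (s, g)) a) := by
        simp only [Fintype.sum_ite_eq]
    _ = _ := by
        rw [sum_comm]
        exact (sum_congr rfl fun g _ => sum_comm).trans sum_comm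

end Decomposition

end

theorem klRisk_eq_modelErr_add_cmi_general {𝒮 𝒢 𝒜 𝒵 : Type*}
    [Fintype 𝒮] [Fintype 𝒢] [Fintype 𝒜] [Fintype 𝒵]
    (p : 𝒮 × 𝒢 × 𝒜 → ℝ) (hp0 : ∀ ω, 0 ≤ p ω)
    (φ : 𝒮 × 𝒢 → 𝒵) (π : 𝒮 → 𝒵 → 𝒜 → ℝ)
    (hπpos : ∀ s z a, 0 < π s z a) :
    KLRisk p φ π =
      ModelErr p φ π +
        CMI p (fun ω => ω.2.2) (fun ω => ω.2.1) (fun ω => (ω.1, φ (ω.1, ω.2.1))) := by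
  rw [klRisk_eq_sum φ π hp0, modelErr_eq_sum φ π hp0, cmi_eq_sum φ hp0]
  simp only [← sum_add_distrib, ← mul_add]
  refine sum_congr rfl fun s _ => sum_congr rfl fun g _ => sum_congr rfl fun a _ => ?_
  rcases (hp0 (s, g, a)).eq_or_lt with h | h
  · simp [← h]
  · rw [log_div_eq_log_div_add_log_div (pA_pos hp0 h).ne' (pAZ_pos φ hp0 h).ne'
      (hπpos _ _ _).ne']

/-- **Conditional KL Risk Decomposition.** For every policy `π` and
representation `φ` with `Z = φ(S,G)`, `R(π;φ) = M(π;φ) + I(A;G|S,Z)`. -/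
theorem klRisk_eq_modelErr_add_cmi {𝒮 𝒢 𝒜 𝒵 : Type*}
    [Fintype 𝒮] [Fintype 𝒢] [Fintype 𝒜] [Fintype 𝒵]
    [Nonempty 𝒮] [Nonempty 𝒢] [Nonempty 𝒜] [Nonempty 𝒵]
    (p : 𝒮 × 𝒢 × 𝒜 → ℝ) (hp0 : ∀ ω, 0 ≤ p ω) (hp1 : ∑ ω : 𝒮 × 𝒢 × 𝒜, p ω = 1)
    (φ : 𝒮 × 𝒢 → 𝒵) (π : 𝒮 → 𝒵 → 𝒜 → ℝ)
    (hπpos : ∀ s z a, 0 < π s z a) (hπsum : ∀ s z, ∑ a : 𝒜, π s z a = 1) :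
    KLRisk p φ π =
      ModelErr p φ π +
        CMI p (fun ω => ω.2.2) (fun ω => ω.2.1) (fun ω => (ω.1, φ (ω.1, ω.2.1))) :=
  klRisk_eq_modelErr_add_cmi_general p hp0 φ π hπpos
end

section
/- Doob–Dynkin direction of value sufficiency: let (Ω, F, μ) be a probability space, let S : Ω → 𝒮 and G : Ω → 𝒢 be random variables into standard Borel spaces, let φ : 𝒮 × 𝒢 → 𝒵 be measurable into a standard Borel space 𝒵 and v : 𝒮 × 𝒢 → ℝ be measurable, and set Z := φ(S,G), V := v(S,G). If V and G are conditionally independent given the σ-algebra generated by (S,Z), then there exists a measurable function ṽ : 𝒮 × 𝒵 → ℝ such that V = ṽ(S,Z) μ-almost surely. -/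
/-!
As `V = v(S,G)` is measurable for `σ(S,Z) ⊔ σ(G)`, the conditional independence of `V` and `G`
given `σ(S,Z)` makes `E[1{V ≤ q} | σ(S,Z)]` and `1{V ≤ q}` have the same integral over every
set `A ∩ {G ∈ B}` with `A ∈ σ(S,Z)`; these sets form a π-system generating `σ(S,Z) ⊔ σ(G)`, so
`1{V ≤ q} = E[1{V ≤ q} | σ(S,Z)]` a.s. Hence every rational sublevel set of `V` is a.s. equal to
a `σ(S,Z)`-measurable set, `V` is a.s. equal to a `σ(S,Z)`-measurable function, and that
function factors measurably through `(S,Z)` by the Doob–Dynkin lemma.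
-/

open scoped Classical
open MeasureTheory
open Set MeasurableSpace

theorem IsPiSystem.image2_inter {α : Type*} {S T : Set (Set α)} (hS : IsPiSystem S)
    (hT : IsPiSystem T) : IsPiSystem (image2 (· ∩ ·) S T) := by
  rintro _ ⟨a₁, ha₁, b₁, hb₁, rfl⟩ _ ⟨a₂, ha₂, b₂, hb₂, rfl⟩ hne
  rw [inter_inter_inter_comm] at hne ⊢
  exact mem_image2_of_mem (hS _ ha₁ _ ha₂ hne.left) (hT _ hb₁ _ hb₂ hne.right)

theorem MeasurableSpace.sup_eq_generateFrom_image2_inter {α : Type*} (m₁ m₂ : MeasurableSpace α) :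
    m₁ ⊔ m₂ =
      generateFrom (image2 (· ∩ ·) {s | MeasurableSet[m₁] s} {s | MeasurableSet[m₂] s}) := by
  refine le_antisymm (sup_le ?_ ?_) (generateFrom_le ?_)
  · exact fun s hs => measurableSet_generateFrom ⟨s, hs, univ, .univ, inter_univ s⟩
  · exact fun s hs => measurableSet_generateFrom ⟨univ, .univ, s, hs, univ_inter s⟩
  · rintro _ ⟨a, ha, b, hb, rfl⟩
    exact (le_sup_left (b := m₂) a ha).inter (le_sup_right (a := m₁) b hb)

theorem setIntegral_eq_setIntegral_of_isPiSystem {α E : Type*} [NormedAddCommGroup E]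
    [NormedSpace ℝ E] {m m₀ : MeasurableSpace α} {μ : Measure[m₀] α} (hm : m ≤ m₀)
    {C : Set (Set α)} (h_gen : m = generateFrom C) (h_pi : IsPiSystem C) {f g : α → E}
    (hf : Integrable f μ) (hg : Integrable g μ) (h_univ : ∫ x, f x ∂μ = ∫ x, g x ∂μ)
    (h_basic : ∀ t ∈ C, ∫ x in t, f x ∂μ = ∫ x in t, g x ∂μ) {s : Set α}
    (hs : MeasurableSet[m] s) : ∫ x in s, f x ∂μ = ∫ x in s, g x ∂μ := by
  induction s, hs using induction_on_inter h_gen h_pi with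
  | empty => simp
  | basic t ht => exact h_basic t ht
  | compl t ht h => rw [setIntegral_compl (hm t ht) hf, setIntegral_compl (hm t ht) hg, h_univ, h]
  | iUnion t hdisj ht h =>
    rw [integral_iUnion (fun i => hm _ (ht i)) hdisj hf.integrableOn,
      integral_iUnion (fun i => hm _ (ht i)) hdisj hg.integrableOn]
    exact tsum_congr h

section CondIndep

variable {Ω : Type*} {m m₂ m₀ : MeasurableSpace Ω} {μ : Measure[m₀] Ω} [IsFiniteMeasure μ]

theorem setIntegral_condExp_inter_eq_of_condIndep (hm : m ≤ m₀) {f : Ω → ℝ}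
    (hf : Integrable f μ) {s : Set Ω} (hs : MeasurableSet s)
    (hCI : μ[f * s.indicator (1 : Ω → ℝ) | m] =ᵐ[μ] μ[f | m] * μ[s.indicator (1 : Ω → ℝ) | m])
    {A : Set Ω} (hA : MeasurableSet[m] A) :
    ∫ x in A ∩ s, (μ[f | m]) x ∂μ = ∫ x in A ∩ s, f x ∂μ := by
  have hAm := hm A hA
  have mul_indicator : ∀ g : Ω → ℝ, g * s.indicator (1 : Ω → ℝ) = s.indicator g := fun g =>
    funext fun x => by by_cases hx : x ∈ s <;> simp [hx]
  have h1 : Integrable (s.indicator (1 : Ω → ℝ)) μ := (integrable_const 1).indicator hs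
  have hfs : Integrable (f * s.indicator (1 : Ω → ℝ)) μ := by
    rw [mul_indicator]; exact hf.indicator hs
  have hcs : Integrable (μ[f | m] * s.indicator (1 : Ω → ℝ)) μ := by
    rw [mul_indicator]; exact integrable_condExp.indicator hs
  calc ∫ x in A ∩ s, (μ[f | m]) x ∂μ
      = ∫ x in A, (μ[f | m] * s.indicator (1 : Ω → ℝ)) x ∂μ := by
        rw [mul_indicator, setIntegral_indicator hs]
    _ = ∫ x in A, (μ[μ[f | m] * s.indicator (1 : Ω → ℝ) | m]) x ∂μ :=
        (setIntegral_condExp hm hcs hA).symm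
    _ = ∫ x in A, (μ[f | m] * μ[s.indicator (1 : Ω → ℝ) | m]) x ∂μ :=
        setIntegral_congr_ae hAm <| (condExp_mul_of_stronglyMeasurable_left
          stronglyMeasurable_condExp hcs h1).mono fun x hx _ => hx
    _ = ∫ x in A, (μ[f * s.indicator (1 : Ω → ℝ) | m]) x ∂μ :=
        setIntegral_congr_ae hAm <| hCI.mono fun x hx _ => hx.symm
    _ = ∫ x in A, (f * s.indicator (1 : Ω → ℝ)) x ∂μ := setIntegral_condExp hm hfs hA
    _ = ∫ x in A ∩ s, f x ∂μ := by rw [mul_indicator, setIntegral_indicator hs]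

theorem condExp_sup_ae_eq_of_condIndep (hm : m ≤ m₀) (hm₂ : m₂ ≤ m₀) {f : Ω → ℝ}
    (hf : Integrable f μ)
    (hCI : ∀ s, MeasurableSet[m₂] s →
      μ[f * s.indicator (1 : Ω → ℝ) | m] =ᵐ[μ] μ[f | m] * μ[s.indicator (1 : Ω → ℝ) | m]) :
    μ[f | m ⊔ m₂] =ᵐ[μ] μ[f | m] := by
  have hsup : m ⊔ m₂ ≤ m₀ := sup_le hm hm₂
  refine (ae_eq_condExp_of_forall_setIntegral_eq hsup hf
    (fun _ _ _ => integrable_condExp.integrableOn) (fun s hs _ => ?_)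
    (stronglyMeasurable_condExp.aestronglyMeasurable.mono le_sup_left)).symm
  refine setIntegral_eq_setIntegral_of_isPiSystem hsup (sup_eq_generateFrom_image2_inter m m₂)
    ((@isPiSystem_measurableSet _ m).image2_inter (@isPiSystem_measurableSet _ m₂))
    integrable_condExp hf (integral_condExp hm) ?_ hs
  rintro _ ⟨A, hA, t, ht, rfl⟩
  exact setIntegral_condExp_inter_eq_of_condIndep hm hf (hm₂ t ht) (hCI t ht) hA

theorem exists_measurableSet_ae_eq_of_condIndep (hm : m ≤ m₀) (hm₂ : m₂ ≤ m₀) {T : Set Ω}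
    (hT : MeasurableSet[m ⊔ m₂] T)
    (hCI : ∀ s, MeasurableSet[m₂] s →
      μ[T.indicator (1 : Ω → ℝ) * s.indicator 1 | m] =ᵐ[μ]
        μ[T.indicator (1 : Ω → ℝ) | m] * μ[s.indicator (1 : Ω → ℝ) | m]) :
    ∃ A, MeasurableSet[m] A ∧ T =ᵐ[μ] A := by
  have hsup : m ⊔ m₂ ≤ m₀ := sup_le hm hm₂
  have hint : Integrable (T.indicator (1 : Ω → ℝ)) μ := (integrable_const 1).indicator (hsup T hT)
  have h := condExp_sup_ae_eq_of_condIndep hm hm₂ hint hCI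
  rw [condExp_of_stronglyMeasurable hsup (stronglyMeasurable_one.indicator hT) hint] at h
  refine ⟨μ[T.indicator (1 : Ω → ℝ) | m] ⁻¹' {1},
    stronglyMeasurable_condExp.measurable (measurableSet_singleton 1), ?_⟩
  filter_upwards [h] with ω hω
  change (ω ∈ T) = (μ[T.indicator 1 | m] ω ∈ ({1} : Set ℝ))
  rw [mem_singleton_iff, ← hω, eq_iff_iff]
  by_cases hωT : ω ∈ T <;> simp [hωT]

end CondIndep

theorem EReal.iInf_rat_ite_eq {x : ℝ} {p : ℚ → Prop} [DecidablePred p]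
    (hp : ∀ q, p q ↔ x ≤ q) : ⨅ q : ℚ, (if p q then ((q : ℝ) : EReal) else ⊤) = x := by
  refine le_antisymm (le_of_forall_gt fun y hxy => ?_) (le_iInf fun q => ?_)
  · obtain ⟨q, hxq, hqy⟩ := EReal.exists_rat_btwn_of_lt hxy
    refine (iInf_le _ q).trans_lt ?_
    rwa [if_pos ((hp q).2 (by exact_mod_cast hxq.le))]
  · split_ifs with hq
    · exact_mod_cast (hp q).1 hq
    · exact le_top

theorem exists_measurable_ae_eq_of_forall_rat {Ω : Type*} {m m₀ : MeasurableSpace Ω}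
    {μ : Measure[m₀] Ω} {f : Ω → ℝ}
    (h : ∀ q : ℚ, ∃ A, MeasurableSet[m] A ∧ f ⁻¹' Iic (q : ℝ) =ᵐ[μ] A) :
    ∃ g : Ω → ℝ, Measurable[m] g ∧ f =ᵐ[μ] g := by
  choose A hA hfA using h
  refine ⟨fun ω => (⨅ q : ℚ, if ω ∈ A q then ((q : ℝ) : EReal) else ⊤).toReal,
    (Measurable.iInf fun q => Measurable.ite (hA q) measurable_const measurable_const).ereal_toReal,
    ?_⟩
  filter_upwards [ae_all_iff.2 hfA] with ω hω
  have hmem : ∀ q : ℚ, ω ∈ A q ↔ f ω ≤ q := fun q => (hω q).symm.to_iff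
  rw [EReal.iInf_rat_ite_eq hmem, EReal.toReal_coe]

/-- **Doob–Dynkin direction of value sufficiency.** With `Z := φ(S,G)` and
`V := v(S,G)`, if `V` and `G` are conditionally independent given `σ(S,Z)` (in the sense
that conditional expectations of products of indicators factorize a.s.), then there is a
measurable `ṽ : 𝒮 × 𝒵 → ℝ` with `V = ṽ(S,Z)` μ-a.s. -/
theorem exists_measurable_factorization_of_condIndep {Ω 𝒮 𝒢 𝒵 : Type*}
    [MeasurableSpace Ω]
    [MeasurableSpace 𝒮] [StandardBorelSpace 𝒮]
    [MeasurableSpace 𝒢] [StandardBorelSpace 𝒢]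
    [MeasurableSpace 𝒵] [StandardBorelSpace 𝒵]
    (μ : Measure Ω) [IsProbabilityMeasure μ]
    (S : Ω → 𝒮) (G : Ω → 𝒢) (φ : 𝒮 × 𝒢 → 𝒵) (v : 𝒮 × 𝒢 → ℝ)
    (hS : Measurable S) (hG : Measurable G) (hφ : Measurable φ) (hv : Measurable v)
    (mSZ : MeasurableSpace Ω)
    (hSZ : mSZ = MeasurableSpace.comap (fun ω => (S ω, φ (S ω, G ω))) inferInstance)
    (hCI : ∀ (B₁ : Set ℝ) (B₂ : Set 𝒢), MeasurableSet B₁ → MeasurableSet B₂ →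
      μ[fun ω => (if v (S ω, G ω) ∈ B₁ then (1 : ℝ) else 0) *
          (if G ω ∈ B₂ then (1 : ℝ) else 0) | mSZ] =ᵐ[μ]
        fun ω => ((μ[fun ω' => if v (S ω', G ω') ∈ B₁ then (1 : ℝ) else 0 | mSZ]) ω) *
          ((μ[fun ω' => if G ω' ∈ B₂ then (1 : ℝ) else 0 | mSZ]) ω)) :
    ∃ vTilde : 𝒮 × 𝒵 → ℝ, Measurable vTilde ∧
      ∀ᵐ ω ∂μ, v (S ω, G ω) = vTilde (S ω, φ (S ω, G ω)) := by
  have hSZ_le : mSZ ≤ _ := hSZ ▸ (hS.prodMk (hφ.comp (hS.prodMk hG))).comap_le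
  have hS_SZ : Measurable[mSZ] S := hSZ ▸ measurable_fst.comp (comap_measurable _)
  have hV : Measurable[mSZ ⊔ MeasurableSpace.comap G inferInstance] fun ω => v (S ω, G ω) :=
    hv.comp ((hS_SZ.mono le_sup_left le_rfl).prodMk ((comap_measurable G).mono le_sup_right le_rfl))
  have hsets : ∀ q : ℚ, ∃ A, MeasurableSet[mSZ] A ∧
      (fun ω => v (S ω, G ω)) ⁻¹' Iic (q : ℝ) =ᵐ[μ] A := by
    refine fun q => exists_measurableSet_ae_eq_of_condIndep hSZ_le hG.comap_le
      (hV measurableSet_Iic) ?_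
    rintro _ ⟨B, hB, rfl⟩
    exact hCI (Iic q) B measurableSet_Iic hB
  obtain ⟨g, hg, hVg⟩ := exists_measurable_ae_eq_of_forall_rat hsets
  subst hSZ
  obtain ⟨h, hh, rfl⟩ := hg.exists_eq_measurable_comp
  exact ⟨h, hh, hVg⟩
end

section
/- Strict value sufficiency implies σ(G) = σ(Z): let 𝒮 be a standard Borel space and V : 𝒮 × 𝒮 → ℝ satisfy V(s,g) = 0 ⟺ s = g for all s, g ∈ 𝒮. Let 𝒵 be a standard Borel space, ψ : 𝒮 → 𝒵 measurable, and ṽ : 𝒮 × 𝒵 → ℝ a function with V(s,g) = ṽ(s, ψ(g)) for all s, g ∈ 𝒮. Then for any measurable function G : Ω → 𝒮 on a measurable space Ω, the σ-algebra generated by Z := ψ ∘ G equals the σ-algebra generated by G; that is, MeasurableSpace.comap (ψ ∘ G) (Borel 𝒵) = MeasurableSpace.comap G (Borel 𝒮). -/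
/-- **Strict value sufficiency implies σ(G) = σ(Z).** Let `𝒮, 𝒵` be
standard Borel spaces, `V : 𝒮 × 𝒮 → ℝ` with `V(s,g) = 0 ⟺ s = g`, `ψ : 𝒮 → 𝒵`
measurable, and `ṽ : 𝒮 × 𝒵 → ℝ` with `V(s,g) = ṽ(s, ψ(g))` for all `s, g`. Then for any
measurable `G : Ω → 𝒮`, the σ-algebra generated by `Z := ψ ∘ G` equals the σ-algebra
generated by `G`. -/
theorem comap_eq_of_strict_value_sufficiency {Ω 𝒮 𝒵 : Type*} [MeasurableSpace Ω]
    [MeasurableSpace 𝒮] [StandardBorelSpace 𝒮]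
    [MeasurableSpace 𝒵] [StandardBorelSpace 𝒵]
    (V : 𝒮 × 𝒮 → ℝ) (hzero : ∀ s g : 𝒮, V (s, g) = 0 ↔ s = g)
    (ψ : 𝒮 → 𝒵) (hψ : Measurable ψ) (vTilde : 𝒮 × 𝒵 → ℝ)
    (hsuff : ∀ s g : 𝒮, V (s, g) = vTilde (s, ψ g))
    (G : Ω → 𝒮) (hG : Measurable G) :
    MeasurableSpace.comap (ψ ∘ G) inferInstance = MeasurableSpace.comap G inferInstance := by
  have hinj : Function.Injective ψ := by
    intro a b hab
    have h1 : V (a, b) = 0 := by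
      rw [hsuff, ← hab, ← hsuff, hzero]
    exact (hzero a b).mp h1
  have hemb : MeasurableEmbedding ψ := hψ.measurableEmbedding hinj
  rw [show ψ ∘ G = ψ ∘ G from rfl, ← MeasurableSpace.comap_comp, hemb.comap_eq]
end
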